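/- arXiv:2602.21556 — 2 statements merged into one kernel-verified Lean document; each statement's English description precedes it below -/
import Mathlib

section
/- Let x ∈ R_{≥0}^M with x ≠ 0, let C ∈ R^{L×M} with Cx ≤ 0, and let d ∈ R^M satisfy: (i) (Cd)_ℓ ≤ 0 for every ℓ in the binding set V(x) = {ℓ : (Cx)_ℓ = 0}; and (ii) d_i ≥ 0 for every i ∉ S(x) = {i : x_i > 0}. Then there exists λ > 0 such that the vector y = x + λd satisfies y ≥ 0 and Cy ≤ 0. If moreover 1^T d < 0, then additionally ‖y‖_1 < ‖x‖_1. -/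
/-- Perturbation step: moving a small amount `λ > 0` along a direction `d` that
respects all constraints binding at `x` keeps the output nonnegative and feasible;
if moreover `1ᵀd < 0`, the ℓ1 norm strictly decreases. -/
theorem perturbation_along_feasible_direction {L M : ℕ}
    (x : Fin M → ℝ) (hx : ∀ i, 0 ≤ x i) (hx0 : x ≠ 0)
    (C : Matrix (Fin L) (Fin M) ℝ) (hfeas : ∀ l, C.mulVec x l ≤ 0)
    (d : Fin M → ℝ)
    (hbindC : ∀ l, C.mulVec x l = 0 → C.mulVec d l ≤ 0)
    (hbindS : ∀ i, x i = 0 → 0 ≤ d i) :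
    ∃ lam : ℝ, 0 < lam ∧
      (∀ i, 0 ≤ (x + lam • d) i) ∧
      (∀ l, C.mulVec (x + lam • d) l ≤ 0) ∧
      ((∑ i, d i) < 0 → (∑ i, (x + lam • d) i) < ∑ i, x i) := by
  classical
  set f : Fin M → ℝ := fun i => if d i < 0 then x i / (-d i) else 1 with hf
  set g : Fin L → ℝ := fun l => if 0 < C.mulVec d l then (-C.mulVec x l) / (C.mulVec d l) else 1
    with hg
  set A : Finset ℝ :=
    insert 1 ((Finset.univ.image f) ∪ (Finset.univ.image g)) with hA
  have hAne : A.Nonempty := ⟨1, Finset.mem_insert_self _ _⟩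
  set lam : ℝ := A.min' hAne with hlam
  have hfpos : ∀ i, 0 < f i := by
    intro i
    by_cases hdi : d i < 0
    · have hxi : 0 < x i := by
        rcases lt_or_eq_of_le (hx i) with h | h
        · exact h
        · exact absurd (hbindS i h.symm) (not_le.mpr hdi)
      simp only [hf, if_pos hdi]
      exact div_pos hxi (neg_pos.mpr hdi)
    · simp [hf, hdi]
  have hgpos : ∀ l, 0 < g l := by
    intro l
    by_cases hdl : 0 < C.mulVec d l
    · have hxl : C.mulVec x l < 0 := by
        rcases lt_or_eq_of_le (hfeas l) with h | h
        · exact h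
        · exact absurd (hbindC l h) (not_le.mpr hdl)
      simp only [hg, if_pos hdl]
      exact div_pos (by linarith) hdl
    · simp [hg, hdl]
  have hpos : 0 < lam := by
    apply (Finset.lt_min'_iff A hAne).mpr
    intro y hy
    simp only [hA, Finset.mem_insert, Finset.mem_union, Finset.mem_image,
      Finset.mem_univ, true_and] at hy
    rcases hy with rfl | ⟨i, rfl⟩ | ⟨l, rfl⟩
    · norm_num
    · exact hfpos i
    · exact hgpos l
  have hlamf : ∀ i, lam ≤ f i := fun i =>
    Finset.min'_le A _ (by
      simp only [hA, Finset.mem_insert, Finset.mem_union, Finset.mem_image,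
        Finset.mem_univ, true_and]
      exact Or.inr (Or.inl ⟨i, rfl⟩))
  have hlamg : ∀ l, lam ≤ g l := fun l =>
    Finset.min'_le A _ (by
      simp only [hA, Finset.mem_insert, Finset.mem_union, Finset.mem_image,
        Finset.mem_univ, true_and]
      exact Or.inr (Or.inr ⟨l, rfl⟩))
  refine ⟨lam, hpos, ?_, ?_, ?_⟩
  · intro i
    simp only [Pi.add_apply, Pi.smul_apply, smul_eq_mul]
    by_cases hdi : d i < 0
    · have h := hlamf i
      rw [hf] at h
      simp only [if_pos hdi] at h
      have hnd : 0 < -d i := neg_pos.mpr hdi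
      have : lam * (-d i) ≤ x i := (le_div_iff₀ hnd).mp h
      nlinarith
    · push_neg at hdi
      have : 0 ≤ lam * d i := mul_nonneg hpos.le hdi
      linarith [hx i]
  · intro l
    have hmv : C.mulVec (x + lam • d) l = C.mulVec x l + lam * C.mulVec d l := by
      rw [Matrix.mulVec_add, Matrix.mulVec_smul]
      simp [smul_eq_mul]
    rw [hmv]
    by_cases hdl : 0 < C.mulVec d l
    · have h := hlamg l
      rw [hg] at h
      simp only [if_pos hdl] at h
      have : lam * C.mulVec d l ≤ -C.mulVec x l := (le_div_iff₀ hdl).mp h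
      linarith
    · push_neg at hdl
      have : lam * C.mulVec d l ≤ 0 := mul_nonpos_of_nonneg_of_nonpos hpos.le hdl
      linarith [hfeas l]
  · intro hsum
    have : (∑ i, (x + lam • d) i) = (∑ i, x i) + lam * ∑ i, d i := by
      simp [Finset.sum_add_distrib, Finset.mul_sum]
    rw [this]
    nlinarith
end

section
/- Let d^(A) ∈ R^M with d^(A) ≰ 0 (some coordinate strictly positive). Let P = {i : d^(A)_i > 0} and N = {i : d^(A)_i ≤ 0}. Define a feature matrix α whose rows are: (1) for each p ∈ P, the standard basis vector e_p; and (2) for each pair (p, q) ∈ P × N, the vector d^(A)_p · e_q − d^(A)_q · e_p (which has nonnegative entries since d^(A)_q ≤ 0). Then every d ∈ R^M satisfying α d ≥ 0 can be written as d = u + λ d^(A) for some u ∈ R_{≥0}^M and λ ≥ 0. -/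
/-- Explicit feature-map construction from the proof of Theorem 4.2 (Sufficient):
if `d^(A) ≰ 0` and `d` satisfies the feature-improving conditions `d_p ≥ 0` for all
`p` with `d^(A)_p > 0` and `d^(A)_p · d_q − d^(A)_q · d_p ≥ 0` for all `p ∈ P`,
`q ∈ N`, then `d = u + λ d^(A)` for some `u ≥ 0` and `λ ≥ 0`. -/
theorem feature_map_construction {M : ℕ}
    (dA : Fin M → ℝ) (hdA : ∃ i, 0 < dA i)
    (d : Fin M → ℝ)
    (h1 : ∀ p, 0 < dA p → 0 ≤ d p)
    (h2 : ∀ p q, 0 < dA p → dA q ≤ 0 → 0 ≤ dA p * d q - dA q * d p) :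
    ∃ (u : Fin M → ℝ) (lam : ℝ),
      (∀ i, 0 ≤ u i) ∧ 0 ≤ lam ∧ d = u + lam • dA := by
  classical
  obtain ⟨i0, hi0⟩ := hdA
  set S : Finset (Fin M) := Finset.univ.filter (fun p => 0 < dA p) with hS
  have hSne : S.Nonempty := ⟨i0, by simp [hS, hi0]⟩
  set lam : ℝ := S.inf' hSne (fun p => d p / dA p) with hlam
  have hlam0 : 0 ≤ lam := by
    apply Finset.le_inf'
    intro p hp
    have hp' : 0 < dA p := by simpa [hS] using hp
    exact div_nonneg (h1 p hp') hp'.le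
  obtain ⟨p0, hp0S, hp0⟩ := S.exists_mem_eq_inf' hSne (fun p => d p / dA p)
  have hp0' : 0 < dA p0 := by simpa [hS] using hp0S
  refine ⟨fun i => d i - lam * dA i, lam, ?_, hlam0, ?_⟩
  · intro i
    show 0 ≤ d i - lam * dA i
    rcases le_or_gt (dA i) 0 with h | h
    · have := h2 p0 i hp0' h
      have hle : lam * dA i ≤ d i := by
        rw [hlam, hp0, div_mul_eq_mul_div, div_le_iff₀ hp0']
        nlinarith
      linarith
    · have hle : lam ≤ d i / dA i := by
        apply Finset.inf'_le
        simp [hS, h]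
      have : lam * dA i ≤ d i := by
        rw [← div_mul_cancel₀ (d i) h.ne']
        exact mul_le_mul_of_nonneg_right hle h.le
      linarith
  · funext i; simp only [Pi.add_apply, Pi.smul_apply, smul_eq_mul]; ring
end
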